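/- The function U(z,t) = c/√(t² + (1+|z|²)²), with the constant c = √2 (more generally any c with c² = 2), satisfies the CR Yamabe equation on the Heisenberg group: −4·Δ_b U = 2·U³, where Δ_b u = (1/2)(Z(Z̄u) + Z̄(Zu)) is the sublaplacian. -/

import Mathlib

/-!
Put `w = 1 + |z|² + i t`, so that `ρ := t² + (1 + |z|²)² = w w̄` and `U = c ρ^{-1/2}`.
Since `Z z = 1`, `Z z̄ = 0` and `Z t = i z̄`, one gets `Z w = 0` and `Z w̄ = 2 z̄`; the Leibniz and
chain rules then give `Z U = -c z̄ w ρ^{-3/2}` and `Z Z̄ U = -c (1 - i t) ρ^{-3/2}`.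
As `U` is real, `Z̄ U` is the conjugate of `Z U` and `Δ_b U = Re (Z Z̄ U) = -c ρ^{-3/2}`, while
`U³ = c³ ρ^{-3/2}`; so `-4 Δ_b U = 2 U³` is the identity `4 c = 2 c³`, i.e. `c² = 2`.
-/

/-- The Heisenberg vector field Z acting on functions u : ℂ × ℝ → ℂ:
`Zu = (1/2)(∂ₓu − i ∂_y u) + i · conj z · ∂ₜ u`. -/
noncomputable def Zop (u : ℂ × ℝ → ℂ) (p : ℂ × ℝ) : ℂ :=
  (1 / 2) * (fderiv ℝ u p ((1 : ℂ), (0 : ℝ)) - Complex.I * fderiv ℝ u p (Complex.I, (0 : ℝ)))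
    + Complex.I * (starRingEnd ℂ) p.1 * fderiv ℝ u p ((0 : ℂ), (1 : ℝ))

/-- The conjugate vector field Z̄:
`Z̄u = (1/2)(∂ₓu + i ∂_y u) − i z ∂ₜ u`. -/
noncomputable def Zbarop (u : ℂ × ℝ → ℂ) (p : ℂ × ℝ) : ℂ :=
  (1 / 2) * (fderiv ℝ u p ((1 : ℂ), (0 : ℝ)) + Complex.I * fderiv ℝ u p (Complex.I, (0 : ℝ)))
    - Complex.I * p.1 * fderiv ℝ u p ((0 : ℂ), (1 : ℝ))

/-- The Heisenberg sublaplacian `Δ_b = (1/2)(ZZ̄ + Z̄Z)`. -/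
noncomputable def sublap (u : ℂ × ℝ → ℂ) (p : ℂ × ℝ) : ℂ :=
  (1 / 2) * (Zop (fun q => Zbarop u q) p + Zbarop (fun q => Zop u q) p)

/-- The standard bubble `U(z,t) = c / √(t² + (1+|z|²)²)`. -/
noncomputable def bubble (c : ℝ) (p : ℂ × ℝ) : ℂ :=
  (c : ℂ) / ((Real.sqrt (p.2 ^ 2 + (1 + ‖p.1‖ ^ 2) ^ 2) : ℝ) : ℂ)

open Complex ComplexConjugate

section HeisenbergCalculus

variable {u v : ℂ × ℝ → ℂ} {p : ℂ × ℝ}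

theorem Zop_const (a : ℂ) : Zop (fun _ => a) p = 0 := by
  simp [Zop]

theorem Zop_add (hu : DifferentiableAt ℝ u p) (hv : DifferentiableAt ℝ v p) :
    Zop (fun q => u q + v q) p = Zop u p + Zop v p := by
  simp only [Zop, fderiv_fun_add hu hv, add_apply]
  ring

theorem Zop_sub (hu : DifferentiableAt ℝ u p) (hv : DifferentiableAt ℝ v p) :
    Zop (fun q => u q - v q) p = Zop u p - Zop v p := by
  simp only [Zop, fderiv_fun_sub hu hv, sub_apply]
  ring

theorem Zop_mul (hu : DifferentiableAt ℝ u p) (hv : DifferentiableAt ℝ v p) :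
    Zop (fun q => u q * v q) p = Zop u p * v p + u p * Zop v p := by
  simp only [Zop, fderiv_fun_mul hu hv, add_apply, smul_apply, smul_eq_mul]
  ring

theorem Zop_const_mul (a : ℂ) (hu : DifferentiableAt ℝ u p) :
    Zop (fun q => a * u q) p = a * Zop u p := by
  rw [Zop_mul (differentiableAt_const a) hu, Zop_const, zero_mul, zero_add]

theorem Zop_ofReal_comp {f : ℝ → ℝ} {g : ℂ × ℝ → ℝ} (hf : DifferentiableAt ℝ f (g p))
    (hg : DifferentiableAt ℝ g p) :
    Zop (fun q => (f (g q) : ℂ)) p = deriv f (g p) * Zop (fun q => (g q : ℂ)) p := by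
  have hg' := ofRealCLM.hasFDerivAt.comp p hg.hasFDerivAt
  have hfg := ofRealCLM.hasFDerivAt.comp p (hf.hasDerivAt.comp_hasFDerivAt p hg.hasFDerivAt)
  simp only [Zop, Function.comp_def, ofRealCLM_apply] at hg' hfg ⊢
  simp only [hg'.fderiv, hfg.fderiv, ContinuousLinearMap.comp_apply, smul_apply,
    ofRealCLM_apply, smul_eq_mul, ofReal_mul]
  ring

theorem Zop_fst : Zop (fun q => q.1) p = 1 := by
  norm_num [Zop, fderiv_fst]

theorem Zop_conj_fst : Zop (fun q => conj q.1) p = 0 := by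
  have := conjCLE.comp_fderiv (f := Prod.fst) (x := p) (𝕜 := ℝ)
  simp only [Function.comp_def, conjCLE_apply] at this
  simp [Zop, this, fderiv_fst]

theorem Zop_ofReal_snd : Zop (fun q => (q.2 : ℂ)) p = I * conj p.1 := by
  have := ofRealCLM.hasFDerivAt.comp p (hasFDerivAt_snd (p := p) (𝕜 := ℝ))
  simp only [Function.comp_def, ofRealCLM_apply] at this
  simp [Zop, this.fderiv]

theorem Zbarop_eq_conj_Zop_conj (u : ℂ × ℝ → ℂ) (p : ℂ × ℝ) :
    Zbarop u p = conj (Zop (fun q => conj (u q)) p) := by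
  have := conjCLE.comp_fderiv (f := u) (x := p) (𝕜 := ℝ)
  simp only [Function.comp_def, conjCLE_apply] at this
  simp only [Zbarop, Zop, this, ContinuousLinearMap.comp_apply, ContinuousLinearEquiv.coe_coe,
    ContinuousAlgEquiv.coeCLE_apply, conjCAE_apply, map_add, map_sub, map_mul, map_div₀, map_one,
    map_ofNat, conj_conj, conj_I]
  ring

theorem sublap_eq_re_of_conj_eq (hu : ∀ q, conj (u q) = u q) (p : ℂ × ℝ) :
    sublap u p = (Zop (Zbarop u) p).re := by
  have hZbar : Zbarop u = fun q => conj (Zop u q) := by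
    funext q
    simp only [Zbarop_eq_conj_Zop_conj, hu]
  have hZbarZ : Zbarop (fun q => Zop u q) p = conj (Zop (Zbarop u) p) := by
    rw [Zbarop_eq_conj_Zop_conj, hZbar]
  rw [sublap, hZbarZ, add_conj]
  simp

end HeisenbergCalculus

section Bubble

noncomputable def cayleyW (q : ℂ × ℝ) : ℂ := 1 + q.1 * conj q.1 + I * q.2

noncomputable def bubbleRadicand (q : ℂ × ℝ) : ℝ := q.2 ^ 2 + (1 + ‖q.1‖ ^ 2) ^ 2

variable {p : ℂ × ℝ}

@[fun_prop]
theorem differentiable_cayleyW : Differentiable ℝ cayleyW := by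
  unfold cayleyW; fun_prop

theorem differentiable_bubbleRadicand : Differentiable ℝ bubbleRadicand :=
  (differentiable_snd.pow 2).add (((differentiable_fst.norm_sq ℝ).const_add 1).pow 2)

theorem bubbleRadicand_pos (q : ℂ × ℝ) : 0 < bubbleRadicand q := by
  unfold bubbleRadicand; positivity

theorem conj_cayleyW (q : ℂ × ℝ) : conj (cayleyW q) = 1 + q.1 * conj q.1 - I * q.2 := by
  simp only [cayleyW, map_add, map_mul, map_one, conj_conj, conj_I, conj_ofReal]
  ring

theorem ofReal_bubbleRadicand (q : ℂ × ℝ) :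
    (bubbleRadicand q : ℂ) = cayleyW q * conj (cayleyW q) := by
  have hz : q.1 * conj q.1 = ((‖q.1‖ ^ 2 : ℝ) : ℂ) := by rw [mul_conj, Complex.sq_norm]
  rw [conj_cayleyW, cayleyW, hz, bubbleRadicand]
  push_cast
  linear_combination (q.2 : ℂ) ^ 2 * I_sq

theorem Zop_cayleyW : Zop cayleyW p = 0 := by
  unfold cayleyW
  rw [Zop_add (by fun_prop) (by fun_prop), Zop_add (by fun_prop) (by fun_prop),
    Zop_mul (by fun_prop) (by fun_prop), Zop_const_mul _ (by fun_prop), Zop_const, Zop_fst,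
    Zop_conj_fst, Zop_ofReal_snd]
  linear_combination conj p.1 * I_sq

theorem Zop_conj_cayleyW : Zop (fun q => conj (cayleyW q)) p = 2 * conj p.1 := by
  simp only [conj_cayleyW]
  rw [Zop_sub (by fun_prop) (by fun_prop), Zop_add (by fun_prop) (by fun_prop),
    Zop_mul (by fun_prop) (by fun_prop), Zop_const_mul _ (by fun_prop), Zop_const, Zop_fst,
    Zop_conj_fst, Zop_ofReal_snd]
  linear_combination -conj p.1 * I_sq

theorem Zop_ofReal_bubbleRadicand :
    Zop (fun q => (bubbleRadicand q : ℂ)) p = 2 * conj p.1 * cayleyW p := by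
  simp only [ofReal_bubbleRadicand]
  rw [Zop_mul (by fun_prop) (by fun_prop), Zop_cayleyW, Zop_conj_cayleyW]
  ring

theorem differentiableAt_ofReal_bubbleRadicand_rpow (s : ℝ) :
    DifferentiableAt ℝ (fun q => ((bubbleRadicand q ^ s : ℝ) : ℂ)) p :=
  ofRealCLM.differentiableAt.comp p
    ((differentiable_bubbleRadicand p).rpow_const (Or.inl (bubbleRadicand_pos p).ne'))

theorem Zop_ofReal_bubbleRadicand_rpow (s : ℝ) :
    Zop (fun q => ((bubbleRadicand q ^ s : ℝ) : ℂ)) p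
      = s * (bubbleRadicand p ^ (s - 1) : ℝ) * (2 * conj p.1 * cayleyW p) := by
  have hrpow := Real.hasDerivAt_rpow_const (p := s) (Or.inl (bubbleRadicand_pos p).ne')
  rw [Zop_ofReal_comp (f := (· ^ s)) hrpow.differentiableAt (differentiable_bubbleRadicand p),
    hrpow.deriv, Zop_ofReal_bubbleRadicand]
  push_cast
  ring

theorem bubble_eq_rpow (c : ℝ) :
    bubble c = fun q => c * ((bubbleRadicand q ^ (-1 / 2 : ℝ) : ℝ) : ℂ) := by
  funext q
  rw [bubble, ← bubbleRadicand, Real.sqrt_eq_rpow, div_eq_mul_inv, ← ofReal_inv,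
    ← Real.rpow_neg (bubbleRadicand_pos q).le, neg_div]

theorem conj_bubble (c : ℝ) (q : ℂ × ℝ) : conj (bubble c q) = bubble c q := by
  rw [bubble_eq_rpow, map_mul, conj_ofReal, conj_ofReal]

theorem Zop_bubble (c : ℝ) :
    Zop (bubble c) p
      = -c * conj p.1 * cayleyW p * (bubbleRadicand p ^ (-3 / 2 : ℝ) : ℝ) := by
  rw [bubble_eq_rpow, Zop_const_mul _ (differentiableAt_ofReal_bubbleRadicand_rpow _),
    Zop_ofReal_bubbleRadicand_rpow, show (-1 / 2 : ℝ) - 1 = -3 / 2 by norm_num]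
  push_cast
  ring

theorem Zbarop_bubble (c : ℝ) :
    Zbarop (bubble c) p
      = -c * p.1 * conj (cayleyW p) * (bubbleRadicand p ^ (-3 / 2 : ℝ) : ℝ) := by
  simp only [Zbarop_eq_conj_Zop_conj, conj_bubble, Zop_bubble, map_mul, map_neg, conj_ofReal,
    conj_conj]

theorem Zop_Zbarop_bubble (c : ℝ) :
    Zop (Zbarop (bubble c)) p = -c * (1 - I * p.2) * (bubbleRadicand p ^ (-3 / 2 : ℝ) : ℝ) := by
  have hρ : ((bubbleRadicand p ^ (-5 / 2 : ℝ) : ℝ) : ℂ) * (cayleyW p * conj (cayleyW p))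
      = (bubbleRadicand p ^ (-3 / 2 : ℝ) : ℝ) := by
    rw [← ofReal_bubbleRadicand, ← ofReal_mul, ← Real.rpow_add_one (bubbleRadicand_pos p).ne']
    norm_num
  rw [show Zbarop (bubble c) = _ from funext fun q => Zbarop_bubble c (p := q),
    Zop_mul (by fun_prop) (differentiableAt_ofReal_bubbleRadicand_rpow _),
    Zop_mul (by fun_prop) (by fun_prop), Zop_const_mul _ (by fun_prop), Zop_fst,
    Zop_conj_cayleyW, Zop_ofReal_bubbleRadicand_rpow, show (-3 / 2 : ℝ) - 1 = -5 / 2 by norm_num]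
  push_cast
  linear_combination (3 * c * p.1 * conj p.1) * hρ
    - c * ((bubbleRadicand p ^ (-3 / 2 : ℝ) : ℝ) : ℂ) * conj_cayleyW p

theorem sublap_bubble (c : ℝ) :
    sublap (bubble c) p = -c * (bubbleRadicand p ^ (-3 / 2 : ℝ) : ℝ) := by
  rw [sublap_eq_re_of_conj_eq (conj_bubble c), Zop_Zbarop_bubble]
  simp

theorem bubble_pow_three (c : ℝ) :
    bubble c p ^ 3 = c ^ 3 * (bubbleRadicand p ^ (-3 / 2 : ℝ) : ℝ) := by
  rw [bubble_eq_rpow, mul_pow]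
  congr 1
  rw [← ofReal_pow, ← Real.rpow_mul_natCast (bubbleRadicand_pos p).le]
  norm_num

end Bubble

theorem bubble_solves_CR_Yamabe (c : ℝ) (hc : c ^ 2 = 2) (p : ℂ × ℝ) :
    -4 * sublap (bubble c) p = 2 * (bubble c p) ^ 3 := by
  rw [sublap_bubble, bubble_pow_three]
  have hc' : (c : ℂ) ^ 2 = 2 := by exact_mod_cast hc
  linear_combination (-2 * c * ((bubbleRadicand p ^ (-3 / 2 : ℝ) : ℝ) : ℂ)) * hc'
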